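/- If A_1 and A_2 both minimize the adversarial classification risk R^ε over Borel sets, then A_1 ∪ A_2 and A_1 ∩ A_2 also minimize R^ε. -/
import Mathlib


open Metric MeasureTheory Pointwise

def epsExp {d : ℕ} (ε : ℝ) (A : Set (EuclideanSpace ℝ (Fin d))) :
    Set (EuclideanSpace ℝ (Fin d)) :=
  A + closedBall (0 : EuclideanSpace ℝ (Fin d)) ε

/-- The adversarial classification risk `R^ε(A) = P₁((A^C)^ε) + P₀(A^ε)`. -/
noncomputable def advRisk {d : ℕ} (P₀ P₁ : Measure (EuclideanSpace ℝ (Fin d)))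
    (ε : ℝ) (A : Set (EuclideanSpace ℝ (Fin d))) : ENNReal :=
  P₁ (epsExp ε Aᶜ) + P₀ (epsExp ε A)

/-- Submodularity of any measure. -/
lemma meas_submod {X : Type*} [MeasurableSpace X] (μ : Measure X) (s t : Set X) :
    μ (s ∪ t) + μ (s ∩ t) ≤ μ s + μ t := by
  have hs := subset_toMeasurable μ s
  have ht := subset_toMeasurable μ t
  calc μ (s ∪ t) + μ (s ∩ t)
      ≤ μ (toMeasurable μ s ∪ toMeasurable μ t) + μ (toMeasurable μ s ∩ toMeasurable μ t) := by
        exact add_le_add (measure_mono (Set.union_subset_union hs ht))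
          (measure_mono (Set.inter_subset_inter hs ht))
    _ = μ (toMeasurable μ s) + μ (toMeasurable μ t) :=
        measure_union_add_inter _ (measurableSet_toMeasurable μ t)
    _ = μ s + μ t := by rw [measure_toMeasurable, measure_toMeasurable]

lemma epsExp_union {d : ℕ} (ε : ℝ) (A B : Set (EuclideanSpace ℝ (Fin d))) :
    epsExp ε (A ∪ B) = epsExp ε A ∪ epsExp ε B := Set.union_add

lemma epsExp_inter_subset {d : ℕ} (ε : ℝ) (A B : Set (EuclideanSpace ℝ (Fin d))) :
    epsExp ε (A ∩ B) ⊆ epsExp ε A ∩ epsExp ε B :=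
  Set.subset_inter (Set.add_subset_add_right Set.inter_subset_left)
    (Set.add_subset_add_right Set.inter_subset_right)

lemma risk_submod {d : ℕ} (P₀ P₁ : Measure (EuclideanSpace ℝ (Fin d)))
    (ε : ℝ) (A B : Set (EuclideanSpace ℝ (Fin d))) :
    advRisk P₀ P₁ ε (A ∪ B) + advRisk P₀ P₁ ε (A ∩ B)
      ≤ advRisk P₀ P₁ ε A + advRisk P₀ P₁ ε B := by
  unfold advRisk
  have h0 : P₀ (epsExp ε (A ∪ B)) + P₀ (epsExp ε (A ∩ B))
      ≤ P₀ (epsExp ε A) + P₀ (epsExp ε B) := by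
    calc P₀ (epsExp ε (A ∪ B)) + P₀ (epsExp ε (A ∩ B))
        ≤ P₀ (epsExp ε A ∪ epsExp ε B) + P₀ (epsExp ε A ∩ epsExp ε B) := by
          gcongr
          · exact (epsExp_union ε A B).le
          · exact epsExp_inter_subset ε A B
      _ ≤ P₀ (epsExp ε A) + P₀ (epsExp ε B) := meas_submod _ _ _
  have h1 : P₁ (epsExp ε (A ∪ B)ᶜ) + P₁ (epsExp ε (A ∩ B)ᶜ)
      ≤ P₁ (epsExp ε Aᶜ) + P₁ (epsExp ε Bᶜ) := by
    rw [Set.compl_union, Set.compl_inter]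
    calc P₁ (epsExp ε (Aᶜ ∩ Bᶜ)) + P₁ (epsExp ε (Aᶜ ∪ Bᶜ))
        ≤ P₁ (epsExp ε Aᶜ ∩ epsExp ε Bᶜ) + P₁ (epsExp ε Aᶜ ∪ epsExp ε Bᶜ) := by
          gcongr
          · exact epsExp_inter_subset ε Aᶜ Bᶜ
          · exact (epsExp_union ε Aᶜ Bᶜ).le
      _ ≤ P₁ (epsExp ε Aᶜ) + P₁ (epsExp ε Bᶜ) := by
          rw [add_comm]; exact meas_submod _ _ _
  calc P₁ (epsExp ε (A ∪ B)ᶜ) + P₀ (epsExp ε (A ∪ B))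
        + (P₁ (epsExp ε (A ∩ B)ᶜ) + P₀ (epsExp ε (A ∩ B)))
      = (P₁ (epsExp ε (A ∪ B)ᶜ) + P₁ (epsExp ε (A ∩ B)ᶜ))
        + (P₀ (epsExp ε (A ∪ B)) + P₀ (epsExp ε (A ∩ B))) := by ring
    _ ≤ (P₁ (epsExp ε Aᶜ) + P₁ (epsExp ε Bᶜ)) + (P₀ (epsExp ε A) + P₀ (epsExp ε B)) :=
        add_le_add h1 h0
    _ = P₁ (epsExp ε Aᶜ) + P₀ (epsExp ε A) + (P₁ (epsExp ε Bᶜ) + P₀ (epsExp ε B)) := by ring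

theorem union_inter_adv_bayes {d : ℕ} (P₀ P₁ : Measure (EuclideanSpace ℝ (Fin d)))
    [IsFiniteMeasure P₀] [IsFiniteMeasure P₁] (ε : ℝ) (hε : 0 ≤ ε)
    (A₁ A₂ : Set (EuclideanSpace ℝ (Fin d)))
    (hA₁ : MeasurableSet A₁) (hA₂ : MeasurableSet A₂)
    (hmin₁ : ∀ B, MeasurableSet B → advRisk P₀ P₁ ε A₁ ≤ advRisk P₀ P₁ ε B)
    (hmin₂ : ∀ B, MeasurableSet B → advRisk P₀ P₁ ε A₂ ≤ advRisk P₀ P₁ ε B) :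
    (∀ B, MeasurableSet B → advRisk P₀ P₁ ε (A₁ ∪ A₂) ≤ advRisk P₀ P₁ ε B) ∧
    (∀ B, MeasurableSet B → advRisk P₀ P₁ ε (A₁ ∩ A₂) ≤ advRisk P₀ P₁ ε B) := by
  have hfin : ∀ A : Set (EuclideanSpace ℝ (Fin d)), advRisk P₀ P₁ ε A ≠ ⊤ := fun A => by
    unfold advRisk
    exact ENNReal.add_ne_top.2 ⟨(measure_lt_top _ _).ne, (measure_lt_top _ _).ne⟩
  have hle₁ : advRisk P₀ P₁ ε A₁ ≤ advRisk P₀ P₁ ε (A₁ ∪ A₂) := hmin₁ _ (hA₁.union hA₂)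
  have hle₂ : advRisk P₀ P₁ ε A₂ ≤ advRisk P₀ P₁ ε (A₁ ∩ A₂) := hmin₂ _ (hA₁.inter hA₂)
  have hsub := risk_submod P₀ P₁ ε A₁ A₂
  have hU : advRisk P₀ P₁ ε (A₁ ∪ A₂) ≤ advRisk P₀ P₁ ε A₁ := by
    by_contra h
    push_neg at h
    have : advRisk P₀ P₁ ε A₁ + advRisk P₀ P₁ ε A₂
        < advRisk P₀ P₁ ε (A₁ ∪ A₂) + advRisk P₀ P₁ ε (A₁ ∩ A₂) :=
      ENNReal.add_lt_add_of_lt_of_le (hfin _) h hle₂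
    exact absurd hsub (not_le.2 this)
  have hI : advRisk P₀ P₁ ε (A₁ ∩ A₂) ≤ advRisk P₀ P₁ ε A₂ := by
    by_contra h
    push_neg at h
    have : advRisk P₀ P₁ ε A₁ + advRisk P₀ P₁ ε A₂
        < advRisk P₀ P₁ ε (A₁ ∪ A₂) + advRisk P₀ P₁ ε (A₁ ∩ A₂) :=
      ENNReal.add_lt_add_of_le_of_lt (hfin _) hle₁ h
    exact absurd hsub (not_le.2 this)
  exact ⟨fun B hB => hU.trans (hmin₁ B hB), fun B hB => hI.trans (hmin₂ B hB)⟩
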